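/- For every ε ∈ (0,1) there exist constants c > 0, C > 0 and Δ_0 > 0 such that for all Δ = T/m ≤ Δ_0 and every grid time t_i < T, one has almost surely, on the event {X^Δ_{t_i} ∈ D_{t_i} and F(t_i, X^Δ_{t_i}) ≥ 2Δ^{(1−ε)/2}}, the conditional bound P[X^Δ_{t_{i+1}} ∉ D_{t_{i+1}} | F_{t_i}] ≤ C exp(−c Δ^{−ε}). In words: if the Euler scheme is at distance at least 2Δ^{(1−ε)/2} from the boundary at a grid time, the conditional probability that it has exited the (time-dependent) domain at the next grid time is exponentially small in Δ^{−ε}. -/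

import Mathlib

open MeasureTheory ProbabilityTheory Set
open scoped RealInnerProductSpace ENNReal NNReal Classical

noncomputable section

/-- A standard `d'`-dimensional Brownian motion on a probability space:
a.s. starting at `0`, a.s. continuous, with independent centered Gaussian
increments with variance `t - s` and independent coordinates. -/
structure IsBrownianMotion {Ω : Type*} {mΩ : MeasurableSpace Ω} (P : Measure Ω) {d' : ℕ}
    (W : ℝ → Ω → EuclideanSpace ℝ (Fin d')) : Prop where
  meas : ∀ t : ℝ, Measurable (W t)
  init : ∀ᵐ ω ∂P, W 0 ω = 0
  cont : ∀ᵐ ω ∂P, Continuous fun t => W t ω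
  gauss : ∀ s t : ℝ, 0 ≤ s → s ≤ t → ∀ i : Fin d',
    P.map (fun ω => W t ω i - W s ω i) = gaussianReal 0 (Real.toNNReal (t - s))
  indep_coords : ∀ s t : ℝ, 0 ≤ s → s ≤ t →
    iIndepFun (fun (i : Fin d') ω => W t ω i - W s ω i) P
  indep_incr : ∀ s t u v : ℝ, 0 ≤ s → s ≤ t → t ≤ u → u ≤ v →
    IndepFun (fun ω => W t ω - W s ω) (fun ω => W v ω - W u ω) P

/-- The Euler scheme with time step `Δ`, started at time `s` from `x`, on the grid
`s, s + Δ, s + 2Δ, …` : values at grid points. -/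
def eulerGridFrom {Ω : Type*} {d d' : ℕ} (Δ s : ℝ)
    (b : ℝ → EuclideanSpace ℝ (Fin d) → EuclideanSpace ℝ (Fin d))
    (σm : ℝ → EuclideanSpace ℝ (Fin d) →
      (EuclideanSpace ℝ (Fin d') →L[ℝ] EuclideanSpace ℝ (Fin d)))
    (W : ℝ → Ω → EuclideanSpace ℝ (Fin d')) (x : EuclideanSpace ℝ (Fin d)) (ω : Ω) :
    ℕ → EuclideanSpace ℝ (Fin d)
  | 0 => x
  | i + 1 =>
      eulerGridFrom Δ s b σm W x ω i
        + Δ • b (s + (i : ℝ) * Δ) (eulerGridFrom Δ s b σm W x ω i)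
        + σm (s + (i : ℝ) * Δ) (eulerGridFrom Δ s b σm W x ω i)
            (W (s + ((i : ℝ) + 1) * Δ) ω - W (s + (i : ℝ) * Δ) ω)

/-- The continuously interpolated Euler scheme with time step `Δ`, started at time `s`
from `x`, evaluated at time `t ≥ s`. -/
def eulerFrom {Ω : Type*} {d d' : ℕ} (Δ s : ℝ)
    (b : ℝ → EuclideanSpace ℝ (Fin d) → EuclideanSpace ℝ (Fin d))
    (σm : ℝ → EuclideanSpace ℝ (Fin d) →
      (EuclideanSpace ℝ (Fin d') →L[ℝ] EuclideanSpace ℝ (Fin d)))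
    (W : ℝ → Ω → EuclideanSpace ℝ (Fin d')) (x : EuclideanSpace ℝ (Fin d))
    (t : ℝ) (ω : Ω) : EuclideanSpace ℝ (Fin d) :=
  let i : ℕ := ⌊(t - s) / Δ⌋₊
  eulerGridFrom Δ s b σm W x ω i
    + (t - (s + (i : ℝ) * Δ)) • b (s + (i : ℝ) * Δ) (eulerGridFrom Δ s b σm W x ω i)
    + σm (s + (i : ℝ) * Δ) (eulerGridFrom Δ s b σm W x ω i)
        (W t ω - W (s + (i : ℝ) * Δ) ω)

/-- Index of the first grid time `s + iΔ`, `i ≥ 1`, at which the Euler scheme started at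
time `s` from `x` has left the time-dependent domain `D_t = {y | F t y > 0}`.
By convention (`sInf ∅ = 0` in `ℕ`), the value `0` encodes that the scheme never exits,
i.e. that the discrete exit time is `+∞`. -/
def discExitIdxFrom {Ω : Type*} {d d' : ℕ} (Δ s : ℝ)
    (F : ℝ → EuclideanSpace ℝ (Fin d) → ℝ)
    (b : ℝ → EuclideanSpace ℝ (Fin d) → EuclideanSpace ℝ (Fin d))
    (σm : ℝ → EuclideanSpace ℝ (Fin d) →
      (EuclideanSpace ℝ (Fin d') →L[ℝ] EuclideanSpace ℝ (Fin d)))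
    (W : ℝ → Ω → EuclideanSpace ℝ (Fin d')) (x : EuclideanSpace ℝ (Fin d)) (ω : Ω) : ℕ :=
  sInf {i : ℕ | 1 ≤ i ∧ F (s + (i : ℝ) * Δ) (eulerGridFrom Δ s b σm W x ω i) ≤ 0}


/-- The property of being a standard Brownian motion adapted to the filtration `ℱ`,
with increments independent of the past. -/
structure IsBMFiltration {Ω : Type*} {mΩ : MeasurableSpace Ω} (P : Measure Ω)
    (ℱ : Filtration ℝ mΩ) {d' : ℕ} (W : ℝ → Ω → EuclideanSpace ℝ (Fin d')) : Prop where
  adapted : ∀ t : ℝ, 0 ≤ t → Measurable[ℱ t] (W t)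
  indep_past : ∀ s t : ℝ, 0 ≤ s → s ≤ t →
    Indep (MeasurableSpace.comap (fun ω => W t ω - W s ω) inferInstance) (ℱ s) P

/-!
If `F(t_i, X_{t_i}) ≥ 2δ` with `δ = Δ^((1-ε)/2)`, the Taylor bound on `F` and `|∇F| ≤ 1` show
that a one-step exit needs a displacement `‖X_{t_{i+1}} - X_{t_i}‖ ≳ δ`; as the drift and the
time dependence of `F` only contribute `O(Δ) ≪ δ`, the Brownian increment itself must satisfy
`‖W_{t_{i+1}} - W_{t_i}‖ ≳ δ`. That increment is independent of `F_{t_i}`, so on the event the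
conditional exit probability is at most the probability of a large increment, and the Gaussian
tail bounds the latter by `C exp(-c δ² / Δ) = C exp(-c Δ^(-ε))`.
-/

lemma hasSubgaussianMGF_of_map_eq_gaussianReal {Ω : Type*} {mΩ : MeasurableSpace Ω}
    {P : Measure Ω} {Y : Ω → ℝ} {v : ℝ≥0} (hY : P.map Y = gaussianReal 0 v) :
    HasSubgaussianMGF Y v P := by
  have hYm : AEMeasurable Y P := aemeasurable_of_map_neZero (by rw [hY]; infer_instance)
  rw [← HasSubgaussianMGF.id_map_iff hYm, hY]
  exact ⟨fun t => integrable_exp_mul_gaussianReal t, fun t => by simp [mgf_id_gaussianReal]⟩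

lemma measureReal_le_abs_le_of_map_eq_gaussianReal {Ω : Type*} {mΩ : MeasurableSpace Ω}
    {P : Measure Ω} [IsFiniteMeasure P] {Y : Ω → ℝ} {v : ℝ≥0}
    (hY : P.map Y = gaussianReal 0 v) {a : ℝ} (ha : 0 ≤ a) :
    P.real {ω | a ≤ |Y ω|} ≤ 2 * Real.exp (-a ^ 2 / (2 * v)) := by
  have hsub : {ω | a ≤ |Y ω|} ⊆ {ω | a ≤ Y ω} ∪ {ω | a ≤ (-Y) ω} :=
    fun ω (hω : a ≤ |Y ω|) => show a ≤ Y ω ∨ a ≤ -Y ω from le_abs.mp hω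
  have hYsg := hasSubgaussianMGF_of_map_eq_gaussianReal hY
  calc P.real {ω | a ≤ |Y ω|}
      ≤ P.real {ω | a ≤ Y ω} + P.real {ω | a ≤ (-Y) ω} :=
        (measureReal_mono hsub).trans (measureReal_union_le _ _)
    _ ≤ Real.exp (-a ^ 2 / (2 * v)) + Real.exp (-a ^ 2 / (2 * v)) :=
        add_le_add (hYsg.measure_ge_le ha) (hYsg.neg.measure_ge_le ha)
    _ = 2 * Real.exp (-a ^ 2 / (2 * v)) := by ring

lemma EuclideanSpace.norm_le_sum_abs {ι : Type*} [Fintype ι] (y : EuclideanSpace ℝ ι) :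
    ‖y‖ ≤ ∑ j, |y j| := by
  calc ‖y‖ = ‖∑ j, y j • EuclideanSpace.basisFun ι ℝ j‖ := by
        congr 1; simpa using ((EuclideanSpace.basisFun ι ℝ).sum_repr y).symm
    _ ≤ ∑ j, ‖y j • EuclideanSpace.basisFun ι ℝ j‖ := norm_sum_le _ _
    _ = ∑ j, |y j| := by simp [norm_smul]

lemma measureReal_le_norm_le_of_map_eq_gaussianReal {Ω : Type*} {mΩ : MeasurableSpace Ω}
    {P : Measure Ω} [IsFiniteMeasure P] {ι : Type*} [Fintype ι]
    {Y : Ω → EuclideanSpace ℝ ι} {v : ℝ≥0}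
    (hY : ∀ j, P.map (fun ω => Y ω j) = gaussianReal 0 v) {a : ℝ} (ha : 0 < a) :
    P.real {ω | a * (Fintype.card ι + 1) ≤ ‖Y ω‖}
      ≤ 2 * Fintype.card ι * Real.exp (-a ^ 2 / (2 * v)) := by
  have hsub : {ω | a * (Fintype.card ι + 1) ≤ ‖Y ω‖} ⊆ ⋃ j, {ω | a ≤ |Y ω j|} := by
    intro ω hω
    by_contra hcon
    simp only [mem_iUnion, mem_ofPred_eq, not_exists, not_le] at hω hcon
    have hsum : ∑ j, |Y ω j| ≤ ∑ _j : ι, a := Finset.sum_le_sum fun j _ => (hcon j).le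
    rw [Finset.sum_const, Finset.card_univ, nsmul_eq_mul] at hsum
    linarith [EuclideanSpace.norm_le_sum_abs (Y ω)]
  calc P.real {ω | a * (Fintype.card ι + 1) ≤ ‖Y ω‖}
      ≤ ∑ j, P.real {ω | a ≤ |Y ω j|} :=
        (measureReal_mono hsub).trans (measureReal_iUnion_fintype_le _)
    _ ≤ ∑ _j : ι, 2 * Real.exp (-a ^ 2 / (2 * v)) :=
        Finset.sum_le_sum fun j _ => measureReal_le_abs_le_of_map_eq_gaussianReal (hY j) ha.le
    _ = 2 * Fintype.card ι * Real.exp (-a ^ 2 / (2 * v)) := by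
        simp only [Finset.sum_const, Finset.card_univ, nsmul_eq_mul]; ring

lemma IsBrownianMotion.measureReal_le_norm_sub {Ω : Type*} {mΩ : MeasurableSpace Ω}
    {P : Measure Ω} [IsFiniteMeasure P] {d' : ℕ} {W : ℝ → Ω → EuclideanSpace ℝ (Fin d')}
    (hW : IsBrownianMotion P W) {s t : ℝ} (hs : 0 ≤ s) (hst : s ≤ t) {a : ℝ} (ha : 0 < a) :
    P.real {ω | a * (d' + 1) ≤ ‖W t ω - W s ω‖}
      ≤ 2 * d' * Real.exp (-a ^ 2 / (2 * (t - s))) := by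
  have h := measureReal_le_norm_le_of_map_eq_gaussianReal
    (Y := fun ω => W t ω - W s ω) (fun j => hW.gauss s t hs hst j) ha
  simpa [Real.coe_toNNReal _ (sub_nonneg.mpr hst)] using h

lemma ae_condExp_indicator_le_of_inter_subset {Ω : Type*} {m m' mΩ : MeasurableSpace Ω}
    {P : Measure Ω} [IsFiniteMeasure P] (hm : m ≤ mΩ) (hm' : m' ≤ mΩ) (hindep : Indep m' m P)
    {G E B : Set Ω} (hG : MeasurableSet[m] G) (hE : MeasurableSet E) (hB : MeasurableSet[m'] B)
    (hsub : G ∩ E ⊆ B) :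
    ∀ᵐ ω ∂P, ω ∈ G → P[E.indicator (fun _ => (1 : ℝ)) | m] ω ≤ P.real B := by
  have hEint : Integrable (E.indicator fun _ => (1 : ℝ)) P :=
    (integrable_const 1).indicator hE
  have hBint : Integrable (B.indicator fun _ => (1 : ℝ)) P :=
    (integrable_const 1).indicator (hm' _ hB)
  have hpull := condExp_indicator hEint hG
  have hmono : P[G.indicator (E.indicator fun _ => (1 : ℝ)) | m]
      ≤ᵐ[P] P[B.indicator (fun _ => (1 : ℝ)) | m] := by
    refine condExp_mono (hEint.indicator (hm _ hG)) hBint (ae_of_all _ fun ω => ?_)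
    rw [indicator_indicator]
    exact indicator_le_indicator_of_subset hsub (fun _ => zero_le_one) ω
  have hindepB : P[B.indicator (fun _ => (1 : ℝ)) | m] =ᵐ[P] fun _ => P.real B := by
    refine (condExp_indep_eq hm' hm (stronglyMeasurable_const.indicator hB) hindep).trans ?_
    simp [integral_indicator_const _ (hm' _ hB)]
  filter_upwards [hpull, hmono, hindepB] with ω hpullω hmonoω hindepω hω
  calc P[E.indicator (fun _ => (1 : ℝ)) | m] ω
      = P[G.indicator (E.indicator fun _ => (1 : ℝ)) | m] ω := by
        rw [hpullω, indicator_of_mem hω]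
    _ ≤ P.real B := hmonoω.trans hindepω.le

lemma mul_le_rpow_of_le_inv_sq {M Δ p : ℝ} (hM : 0 < M) (hΔ : 0 < Δ) (hΔ1 : Δ ≤ 1)
    (hΔM : Δ ≤ M⁻¹ ^ 2) (hp : p ≤ 1 / 2) : M * Δ ≤ Δ ^ p := by
  have hsqrt : M * √Δ ≤ 1 := by
    have h := Real.sqrt_le_sqrt hΔM
    rw [Real.sqrt_sq (inv_nonneg.mpr hM.le)] at h
    simpa [hM.ne'] using mul_le_mul_of_nonneg_left h hM.le
  calc M * Δ = M * √Δ * √Δ := by rw [mul_assoc, Real.mul_self_sqrt hΔ.le]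
    _ ≤ Δ ^ (1 / 2 : ℝ) := by
        rw [← Real.sqrt_eq_rpow]
        exact mul_le_of_le_one_left (Real.sqrt_nonneg _) hsqrt
    _ ≤ Δ ^ p := Real.rpow_le_rpow_of_exponent_ge hΔ hΔ1 hp

lemma rpow_div_sq_div {Δ ε B : ℝ} (hΔ : 0 < Δ) (hB : B ≠ 0) :
    (Δ ^ ((1 - ε) / 2) / B) ^ 2 / (2 * Δ) = (2 * B ^ 2)⁻¹ * Δ ^ (-ε) := by
  have hsq : (Δ ^ ((1 - ε) / 2)) ^ 2 = Δ * Δ ^ (-ε) := by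
    rw [← Real.rpow_natCast, ← Real.rpow_mul hΔ.le,
      show (1 - ε) / 2 * ((2 : ℕ) : ℝ) = 1 + -ε by push_cast; ring, Real.rpow_add hΔ,
      Real.rpow_one]
  rw [div_pow, hsq]
  field_simp

section TaylorBound

variable {E : Type*} [NormedAddCommGroup E] [InnerProductSpace ℝ E] {K : ℝ}

lemma abs_sub_le_of_taylor {f : E → ℝ} {g : E → E}
    (hTay : ∀ y z, |f z - f y - ⟪g y, z - y⟫| ≤ K * ‖z - y‖ ^ 2) (hg : ∀ y, ‖g y‖ ≤ 1)
    (y z : E) : |f z - f y| ≤ ‖z - y‖ + K * ‖z - y‖ ^ 2 := by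
  have hinner : |⟪g y, z - y⟫| ≤ ‖z - y‖ :=
    (abs_real_inner_le_norm _ _).trans (mul_le_of_le_one_left (norm_nonneg _) (hg y))
  calc |f z - f y| = |⟪g y, z - y⟫ + (f z - f y - ⟪g y, z - y⟫)| := by ring_nf
    _ ≤ ‖z - y‖ + K * ‖z - y‖ ^ 2 := (abs_add_le _ _).trans (add_le_add hinner (hTay y z))

lemma continuous_of_taylor {f : E → ℝ} {g : E → E}
    (hTay : ∀ y z, |f z - f y - ⟪g y, z - y⟫| ≤ K * ‖z - y‖ ^ 2) (hg : ∀ y, ‖g y‖ ≤ 1) :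
    Continuous f := by
  refine continuous_iff_continuousAt.mpr fun y => tendsto_iff_dist_tendsto_zero.mpr ?_
  have hlim : Filter.Tendsto (fun z => ‖z - y‖ + K * ‖z - y‖ ^ 2) (nhds y) (nhds 0) := by
    have hcont : Continuous fun z => ‖z - y‖ + K * ‖z - y‖ ^ 2 := by fun_prop
    simpa using hcont.tendsto y
  exact squeeze_zero (fun _ => dist_nonneg) (fun z => abs_sub_le_of_taylor hTay hg y z) hlim

lemma le_mul_norm_sub_of_exit {F : ℝ → E → ℝ} {gradF : ℝ → E → E} (hK : 0 ≤ K)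
    (hFt : ∀ s t y, |F s y - F t y| ≤ K * |s - t|)
    (hTay : ∀ t y z, |F t z - F t y - ⟪gradF t y, z - y⟫| ≤ K * ‖z - y‖ ^ 2)
    (hgradN : ∀ t y, ‖gradF t y‖ ≤ 1) {s t δ : ℝ} {y z : E} (hδ : δ ≤ 1)
    (hst : K * |s - t| ≤ δ) (hy : 2 * δ ≤ F t y) (hz : F s z ≤ 0) :
    δ ≤ (K + 1) * ‖z - y‖ := by
  have hspace := (abs_le.mp (abs_sub_le_of_taylor (hTay t) (hgradN t) y z)).1
  have htime := (abs_le.mp (hFt s t z)).1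
  have hn := norm_nonneg (z - y)
  rcases le_or_gt ‖z - y‖ 1 with h | h
  · nlinarith [mul_le_mul_of_nonneg_left (mul_le_of_le_one_left hn h) hK]
  · nlinarith

end TaylorBound

lemma measurable_eulerGridFrom {Ω : Type*} {mΩ : MeasurableSpace Ω} {d d' : ℕ}
    {ℱ : Filtration ℝ mΩ} {W : ℝ → Ω → EuclideanSpace ℝ (Fin d')}
    (hW : ∀ t : ℝ, 0 ≤ t → Measurable[ℱ t] (W t))
    {b : ℝ → EuclideanSpace ℝ (Fin d) → EuclideanSpace ℝ (Fin d)}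
    {σm : ℝ → EuclideanSpace ℝ (Fin d) →
      (EuclideanSpace ℝ (Fin d') →L[ℝ] EuclideanSpace ℝ (Fin d))}
    (hb : Measurable (Function.uncurry b))
    (hσ : Measurable fun p : (ℝ × EuclideanSpace ℝ (Fin d)) × EuclideanSpace ℝ (Fin d') =>
      σm p.1.1 p.1.2 p.2)
    {Δ s : ℝ} (hΔ : 0 ≤ Δ) (hs : 0 ≤ s) (x : EuclideanSpace ℝ (Fin d)) (i : ℕ) :
    Measurable[ℱ (s + i * Δ)] (fun ω => eulerGridFrom Δ s b σm W x ω i) := by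
  induction i with
  | zero => exact measurable_const
  | succ k ih =>
    have hle : s + k * Δ ≤ s + (k + 1 : ℕ) * Δ := by push_cast; nlinarith
    have hW' : ∀ t, 0 ≤ t → t ≤ s + (k + 1 : ℕ) * Δ →
        Measurable[ℱ (s + (k + 1 : ℕ) * Δ)] (W t) :=
      fun t ht htk => (hW t ht).mono (ℱ.mono htk) le_rfl
    have hX : Measurable[ℱ (s + (k + 1 : ℕ) * Δ)] fun ω => eulerGridFrom Δ s b σm W x ω k :=
      ih.mono (ℱ.mono hle) le_rfl
    have hinc : Measurable[ℱ (s + (k + 1 : ℕ) * Δ)]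
        fun ω => W (s + (k + 1) * Δ) ω - W (s + k * Δ) ω :=
      (hW' _ (by positivity) (by push_cast; rfl)).sub (hW' _ (by positivity) hle)
    exact (hX.add ((hb.comp (measurable_const.prodMk hX)).const_smul Δ)).add
      (hσ.comp ((measurable_const.prodMk hX).prodMk hinc))

section EulerStep

variable {Ω : Type*} {d d' : ℕ}
  {b : ℝ → EuclideanSpace ℝ (Fin d) → EuclideanSpace ℝ (Fin d)}
  {σm : ℝ → EuclideanSpace ℝ (Fin d) →
    (EuclideanSpace ℝ (Fin d') →L[ℝ] EuclideanSpace ℝ (Fin d))}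
  {W : ℝ → Ω → EuclideanSpace ℝ (Fin d')} {Kb Kσ Δ s : ℝ}

lemma norm_eulerGridFrom_succ_sub_le (hbB : ∀ t y, ‖b t y‖ ≤ Kb) (hσB : ∀ t y, ‖σm t y‖ ≤ Kσ)
    (hΔ : 0 ≤ Δ) (x : EuclideanSpace ℝ (Fin d)) (ω : Ω) (i : ℕ) :
    ‖eulerGridFrom Δ s b σm W x ω (i + 1) - eulerGridFrom Δ s b σm W x ω i‖
      ≤ Kb * Δ + Kσ * ‖W (s + (i + 1) * Δ) ω - W (s + i * Δ) ω‖ := by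
  set y := eulerGridFrom Δ s b σm W x ω i
  set w := W (s + (i + 1) * Δ) ω - W (s + i * Δ) ω
  have hstep : eulerGridFrom Δ s b σm W x ω (i + 1) - y
      = Δ • b (s + i * Δ) y + σm (s + i * Δ) y w := by
    simp only [eulerGridFrom]; abel
  rw [hstep]
  refine (norm_add_le _ _).trans (add_le_add ?_ ?_)
  · rw [norm_smul, Real.norm_of_nonneg hΔ, mul_comm]
    exact mul_le_mul_of_nonneg_right (hbB _ _) hΔ
  · exact ((σm _ _).le_opNorm w).trans (mul_le_mul_of_nonneg_right (hσB _ _) (norm_nonneg w))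

lemma le_norm_increment_of_eulerExit {K : ℝ} (hK : 0 ≤ K)
    {F : ℝ → EuclideanSpace ℝ (Fin d) → ℝ}
    {gradF : ℝ → EuclideanSpace ℝ (Fin d) → EuclideanSpace ℝ (Fin d)}
    (hFt : ∀ s t y, |F s y - F t y| ≤ K * |s - t|)
    (hTay : ∀ t y z, |F t z - F t y - ⟪gradF t y, z - y⟫| ≤ K * ‖z - y‖ ^ 2)
    (hgradN : ∀ t y, ‖gradF t y‖ ≤ 1) (hbB : ∀ t y, ‖b t y‖ ≤ Kb) (hσB : ∀ t y, ‖σm t y‖ ≤ Kσ)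
    (hΔ : 0 ≤ Δ) {δ : ℝ} (hδ : δ ≤ 1) (hΔδ : 2 * (K + 1) * (Kb + 1) * Δ ≤ δ)
    {x : EuclideanSpace ℝ (Fin d)} {ω : Ω} {i : ℕ}
    (hy : 2 * δ ≤ F (s + i * Δ) (eulerGridFrom Δ s b σm W x ω i))
    (hz : F (s + (i + 1) * Δ) (eulerGridFrom Δ s b σm W x ω (i + 1)) ≤ 0) :
    δ / (2 * (K + 1) * (Kσ + 1)) ≤ ‖W (s + (i + 1) * Δ) ω - W (s + i * Δ) ω‖ := by
  have hKb : 0 ≤ Kb := (norm_nonneg _).trans (hbB 0 0)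
  have hKσ : 0 ≤ Kσ := (norm_nonneg _).trans (hσB 0 0)
  have hKΔ : K * |(s + (i + 1) * Δ) - (s + i * Δ)| ≤ δ := by
    rw [show (s + (i + 1) * Δ) - (s + i * Δ) = Δ by ring, abs_of_nonneg hΔ]
    nlinarith [mul_nonneg hK hΔ, mul_nonneg hKb hΔ, mul_nonneg (mul_nonneg hK hKb) hΔ]
  have hdisp := le_mul_norm_sub_of_exit hK hFt hTay hgradN hδ hKΔ hy hz
  have hstep := norm_eulerGridFrom_succ_sub_le (W := W) (s := s) hbB hσB hΔ x ω i
  set w := ‖W (s + (i + 1) * Δ) ω - W (s + i * Δ) ω‖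
  have hw : 0 ≤ w := norm_nonneg _
  rw [div_le_iff₀ (by positivity)]
  nlinarith [mul_le_mul_of_nonneg_left hstep (by linarith : (0 : ℝ) ≤ K + 1)]

end EulerStep

lemma ae_condExp_eulerExit_le {Ω : Type*} {mΩ : MeasurableSpace Ω} {P : Measure Ω}
    [IsProbabilityMeasure P] {d d' : ℕ} {ℱ : Filtration ℝ mΩ}
    {W : ℝ → Ω → EuclideanSpace ℝ (Fin d')} (hW : IsBrownianMotion P W)
    (hWF : IsBMFiltration P ℱ W)
    {b : ℝ → EuclideanSpace ℝ (Fin d) → EuclideanSpace ℝ (Fin d)}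
    {σm : ℝ → EuclideanSpace ℝ (Fin d) →
      (EuclideanSpace ℝ (Fin d') →L[ℝ] EuclideanSpace ℝ (Fin d))}
    (hbmeas : Measurable (Function.uncurry b))
    (hσmeas : Measurable fun p : (ℝ × EuclideanSpace ℝ (Fin d)) × EuclideanSpace ℝ (Fin d') =>
      σm p.1.1 p.1.2 p.2)
    {Kb Kσ : ℝ} (hbB : ∀ t y, ‖b t y‖ ≤ Kb) (hσB : ∀ t y, ‖σm t y‖ ≤ Kσ)
    {K : ℝ} (hK : 0 ≤ K) {F : ℝ → EuclideanSpace ℝ (Fin d) → ℝ}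
    {gradF : ℝ → EuclideanSpace ℝ (Fin d) → EuclideanSpace ℝ (Fin d)}
    (hFt : ∀ s t y, |F s y - F t y| ≤ K * |s - t|)
    (hTay : ∀ t y z, |F t z - F t y - ⟪gradF t y, z - y⟫| ≤ K * ‖z - y‖ ^ 2)
    (hgradN : ∀ t y, ‖gradF t y‖ ≤ 1)
    {Δ s δ : ℝ} (hΔ : 0 < Δ) (hs : 0 ≤ s) (hδ0 : 0 < δ) (hδ1 : δ ≤ 1)
    (hΔδ : 2 * (K + 1) * (Kb + 1) * Δ ≤ δ) (x : EuclideanSpace ℝ (Fin d)) (i : ℕ) :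
    ∀ᵐ ω ∂P, 2 * δ ≤ F (s + i * Δ) (eulerGridFrom Δ s b σm W x ω i) →
      P[{ω' | F (s + (i + 1) * Δ) (eulerGridFrom Δ s b σm W x ω' (i + 1)) ≤ 0}.indicator
          (fun _ => (1 : ℝ)) | ℱ (s + i * Δ)] ω
        ≤ 2 * d' * Real.exp (-(δ / (2 * (K + 1) * (Kσ + 1) * (d' + 1))) ^ 2 / (2 * Δ)) := by
  have hKσ : 0 ≤ Kσ := (norm_nonneg _).trans (hσB 0 0)
  set a := δ / (2 * (K + 1) * (Kσ + 1) * (d' + 1))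
  have ha : 0 < a := by positivity
  have ht : 0 ≤ s + i * Δ := by positivity
  have htt : s + i * Δ ≤ s + (i + 1) * Δ := by nlinarith
  have hFc := fun t => continuous_of_taylor (hTay t) (hgradN t)
  have hX := measurable_eulerGridFrom hWF.adapted hbmeas hσmeas hΔ.le hs x
  have hinc : Measurable fun ω => W (s + (i + 1) * Δ) ω - W (s + i * Δ) ω :=
    (hW.meas _).sub (hW.meas _)
  have hG : MeasurableSet[ℱ (s + i * Δ)]
      {ω | 2 * δ ≤ F (s + i * Δ) (eulerGridFrom Δ s b σm W x ω i)} :=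
    measurableSet_le measurable_const ((hFc _).measurable.comp (hX i))
  have hE : MeasurableSet
      {ω | F (s + (i + 1) * Δ) (eulerGridFrom Δ s b σm W x ω (i + 1)) ≤ 0} :=
    measurableSet_le ((hFc _).measurable.comp ((hX (i + 1)).mono (ℱ.le _) le_rfl))
      measurable_const
  have hB : MeasurableSet[MeasurableSpace.comap
      (fun ω => W (s + (i + 1) * Δ) ω - W (s + i * Δ) ω) inferInstance]
      {ω | a * (d' + 1) ≤ ‖W (s + (i + 1) * Δ) ω - W (s + i * Δ) ω‖} :=
    ⟨{v | a * (d' + 1) ≤ ‖v‖}, measurableSet_le measurable_const measurable_norm, rfl⟩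
  have hsub : {ω | 2 * δ ≤ F (s + i * Δ) (eulerGridFrom Δ s b σm W x ω i)}
      ∩ {ω | F (s + (i + 1) * Δ) (eulerGridFrom Δ s b σm W x ω (i + 1)) ≤ 0}
      ⊆ {ω | a * (d' + 1) ≤ ‖W (s + (i + 1) * Δ) ω - W (s + i * Δ) ω‖} := by
    rintro ω ⟨hy, hz⟩
    have h := le_norm_increment_of_eulerExit hK hFt hTay hgradN hbB hσB hΔ.le hδ1 hΔδ hy hz
    have ha' : a * (d' + 1) = δ / (2 * (K + 1) * (Kσ + 1)) := by
      simp only [a]; field_simp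
    rwa [mem_ofPred_eq, ha']
  have htail := hW.measureReal_le_norm_sub ht htt ha
  rw [show s + (i + 1) * Δ - (s + i * Δ) = Δ by ring] at htail
  filter_upwards [ae_condExp_indicator_le_of_inter_subset (ℱ.le _) hinc.comap_le
    (hWF.indep_past _ _ ht htt) hG hE hB hsub] with ω hω hy
  exact (hω hy).trans htail

theorem conditional_exit_prob_small_general
    {Ω : Type*} {mΩ : MeasurableSpace Ω} (P : Measure Ω) [IsProbabilityMeasure P]
    {d d' : ℕ} (ℱ : Filtration ℝ mΩ)
    (W : ℝ → Ω → EuclideanSpace ℝ (Fin d'))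
    (hW : IsBrownianMotion P W) (hWF : IsBMFiltration P ℱ W)
    (T : ℝ) (hT : 0 < T)
    (b : ℝ → EuclideanSpace ℝ (Fin d) → EuclideanSpace ℝ (Fin d))
    (σm : ℝ → EuclideanSpace ℝ (Fin d) →
      (EuclideanSpace ℝ (Fin d') →L[ℝ] EuclideanSpace ℝ (Fin d)))
    (hbmeas : Measurable (Function.uncurry b))
    (hσmeas : Measurable fun p : (ℝ × EuclideanSpace ℝ (Fin d)) × EuclideanSpace ℝ (Fin d') =>
      σm p.1.1 p.1.2 p.2)
    (Kb Kσ : ℝ)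
    (hbB : ∀ t y, ‖b t y‖ ≤ Kb) (hσB : ∀ t y, ‖σm t y‖ ≤ Kσ)
    (K : ℝ) (hK : 0 ≤ K)
    (F : ℝ → EuclideanSpace ℝ (Fin d) → ℝ)
    (gradF : ℝ → EuclideanSpace ℝ (Fin d) → EuclideanSpace ℝ (Fin d))
    (hFt : ∀ s t y, |F s y - F t y| ≤ K * |s - t|)
    (hTay : ∀ (t : ℝ) (y z : EuclideanSpace ℝ (Fin d)),
      |F t z - F t y - ⟪gradF t y, z - y⟫| ≤ K * ‖z - y‖ ^ 2)
    (hgradN : ∀ t y, ‖gradF t y‖ ≤ 1)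
    (ε : ℝ) (hε0 : 0 < ε) (hε1 : ε < 1) :
    ∃ c > (0:ℝ), ∃ C > (0:ℝ), ∃ Δ₀ > (0:ℝ),
      ∀ m : ℕ, 1 ≤ m → T / m ≤ Δ₀ →
      ∀ x : EuclideanSpace ℝ (Fin d), ∀ i : ℕ, (i : ℝ) * (T / m) < T →
      ∀ᵐ ω ∂P,
        (0 < F ((i : ℝ) * (T / m)) (eulerGridFrom (T / m) 0 b σm W x ω i) ∧
          2 * (T / m) ^ ((1 - ε) / 2)
            ≤ F ((i : ℝ) * (T / m)) (eulerGridFrom (T / m) 0 b σm W x ω i)) →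
        (P[Set.indicator
            {ω' | F (((i : ℝ) + 1) * (T / m)) (eulerGridFrom (T / m) 0 b σm W x ω' (i + 1)) ≤ 0}
            (fun _ => (1:ℝ)) | ℱ ((i : ℝ) * (T / m))]) ω
          ≤ C * Real.exp (-(c * (T / m) ^ (-ε))) := by
  set M : ℝ := 2 * (K + 1) * (Kb + 1)
  set B : ℝ := 2 * (K + 1) * (Kσ + 1) * (d' + 1)
  have hKσ : 0 ≤ Kσ := (norm_nonneg _).trans (hσB 0 0)
  have hM : 0 < M := by have := (norm_nonneg _).trans (hbB 0 0); positivity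
  refine ⟨(2 * B ^ 2)⁻¹, by positivity, 2 * d' + 1, by positivity, min 1 (M⁻¹ ^ 2),
    by positivity, fun m hm hΔ₀ x i _ => ?_⟩
  have hΔ : 0 < T / m := div_pos hT (by exact_mod_cast hm)
  have hΔ1 : T / m ≤ 1 := hΔ₀.trans (min_le_left _ _)
  have hδ1 : (T / m) ^ ((1 - ε) / 2) ≤ 1 := Real.rpow_le_one hΔ.le hΔ1 (by linarith)
  have hΔδ : M * (T / m) ≤ (T / m) ^ ((1 - ε) / 2) :=
    mul_le_rpow_of_le_inv_sq hM hΔ hΔ1 (hΔ₀.trans (min_le_right _ _)) (by linarith)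
  filter_upwards [ae_condExp_eulerExit_le (s := 0) hW hWF hbmeas hσmeas hbB hσB hK hFt hTay
    hgradN hΔ le_rfl (Real.rpow_pos_of_pos hΔ _) hδ1 hΔδ x i] with ω hω hyp
  simp only [zero_add] at hω
  calc _ ≤ _ := hω hyp.2
    _ ≤ _ := by
      rw [neg_div, rpow_div_sq_div hΔ (by positivity)]
      gcongr
      linarith

/-- **Conditional exit probability is exponentially small far from the boundary**: if at
a grid time `t_i` the Euler scheme lies in `D_{t_i}` at distance at least
`2Δ^((1-ε)/2)` from the boundary, the conditional probability given `F_{t_i}` that it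
has exited the time-dependent domain at the next grid time is at most
`C exp(-c Δ^{-ε})`. -/
theorem conditional_exit_prob_small
    {Ω : Type*} {mΩ : MeasurableSpace Ω} (P : Measure Ω) [IsProbabilityMeasure P]
    {d d' : ℕ} (ℱ : Filtration ℝ mΩ)
    (W : ℝ → Ω → EuclideanSpace ℝ (Fin d'))
    (hW : IsBrownianMotion P W) (hWF : IsBMFiltration P ℱ W)
    (T : ℝ) (hT : 0 < T)
    (b : ℝ → EuclideanSpace ℝ (Fin d) → EuclideanSpace ℝ (Fin d))
    (σm : ℝ → EuclideanSpace ℝ (Fin d) →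
      (EuclideanSpace ℝ (Fin d') →L[ℝ] EuclideanSpace ℝ (Fin d)))
    (hbmeas : Measurable (Function.uncurry b))
    (hσmeas : Measurable fun p : (ℝ × EuclideanSpace ℝ (Fin d)) × EuclideanSpace ℝ (Fin d') =>
      σm p.1.1 p.1.2 p.2)
    (Kb Kσ : ℝ)
    (hbB : ∀ t y, ‖b t y‖ ≤ Kb) (hσB : ∀ t y, ‖σm t y‖ ≤ Kσ)
    (K : ℝ) (hK : 0 ≤ K)
    (F : ℝ → EuclideanSpace ℝ (Fin d) → ℝ)
    (gradF : ℝ → EuclideanSpace ℝ (Fin d) → EuclideanSpace ℝ (Fin d))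
    (hFgrad : ∀ t y, HasGradientAt (F t) (gradF t y) y)
    (hFt : ∀ s t y, |F s y - F t y| ≤ K * |s - t|)
    (hTay : ∀ (t : ℝ) (y z : EuclideanSpace ℝ (Fin d)),
      |F t z - F t y - ⟪gradF t y, z - y⟫| ≤ K * ‖z - y‖ ^ 2)
    (hgradN : ∀ t y, ‖gradF t y‖ ≤ 1)
    (ε : ℝ) (hε0 : 0 < ε) (hε1 : ε < 1) :
    ∃ c > (0:ℝ), ∃ C > (0:ℝ), ∃ Δ₀ > (0:ℝ),
      ∀ m : ℕ, 1 ≤ m → T / m ≤ Δ₀ →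
      ∀ x : EuclideanSpace ℝ (Fin d), ∀ i : ℕ, (i : ℝ) * (T / m) < T →
      ∀ᵐ ω ∂P,
        (0 < F ((i : ℝ) * (T / m)) (eulerGridFrom (T / m) 0 b σm W x ω i) ∧
          2 * (T / m) ^ ((1 - ε) / 2)
            ≤ F ((i : ℝ) * (T / m)) (eulerGridFrom (T / m) 0 b σm W x ω i)) →
        (P[Set.indicator
            {ω' | F (((i : ℝ) + 1) * (T / m)) (eulerGridFrom (T / m) 0 b σm W x ω' (i + 1)) ≤ 0}
            (fun _ => (1:ℝ)) | ℱ ((i : ℝ) * (T / m))]) ω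
          ≤ C * Real.exp (-(c * (T / m) ^ (-ε))) :=
  conditional_exit_prob_small_general P ℱ W hW hWF T hT b σm hbmeas hσmeas Kb Kσ hbB hσB K hK F
    gradF hFt hTay hgradN ε hε0 hε1
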